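/- There exist real numbers r > 1, y ∈ [0,1], f, t with 0 ≤ f < t ≤ 1, β₁, β₂ ∈ [0,1] with β₁ < β₂, a continuous strictly increasing function p : [0,1] → [0,1], and Bayesian endogenous equilibria (x₁, P₁) for parameters (β₁, y, r, f, t, p) and (x₂, P₂) for parameters (β₂, y, r, f, t, p), such that the social costs satisfy 𝒥_B(x₁) < 𝒥_B(x₂); that is, with an endogenous accident probability, equilibrium social cost can strictly increase when the information quality β increases. -/
import Mathlib


open Set

/-- Recklessness threshold for signaled V2V drivers. -/
noncomputable def Pvs (r f t : ℝ) : ℝ := f / (r * t + f)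

/-- Recklessness threshold for non-V2V drivers. -/
noncomputable def Pn (r : ℝ) : ℝ := 1 / (1 + r)

/-- Recklessness threshold for unsignaled V2V drivers. -/
noncomputable def Pvu (r β f t : ℝ) : ℝ := (1 - β * f) / (1 + r * (1 - β * t) - β * f)

/-- Probability `σ(P)` that a warning signal is displayed when the accident probability is `P`. -/
noncomputable def sig (β f t P : ℝ) : ℝ := β * (P * t + (1 - P) * f)

/-- A Bayesian equilibrium with accident probability `P`:
`xnC, xnR` are the masses of careful/reckless non-V2V drivers, `cu, ρu` the fractions of the
unsignaled V2V population (of mass `(1-σ(P))·y`) choosing Careful/Reckless, and `cs, ρs` the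
fractions of the signaled V2V population (of mass `σ(P)·y`) choosing Careful/Reckless. -/
structure BayesEq (r y β f t P xnC xnR cu ρu cs ρs : ℝ) : Prop where
  xnC_nonneg : 0 ≤ xnC
  xnR_nonneg : 0 ≤ xnR
  cu_nonneg : 0 ≤ cu
  ρu_nonneg : 0 ≤ ρu
  cs_nonneg : 0 ≤ cs
  ρs_nonneg : 0 ≤ ρs
  sum_n : xnC + xnR = 1 - y
  sum_u : cu + ρu = 1
  sum_s : cs + ρs = 1
  best_nR : 0 < xnR → r * P ≤ 1 - P
  best_nC : 0 < xnC → 1 - P ≤ r * P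
  best_ρu : 0 < ρu * (1 - sig β f t P) * y → r * P * (1 - β * t) ≤ (1 - P) * (1 - β * f)
  best_cu : 0 < cu * (1 - sig β f t P) * y → (1 - P) * (1 - β * f) ≤ r * P * (1 - β * t)
  best_ρs : 0 < ρs * sig β f t P * y → r * P * (β * t) ≤ (1 - P) * (β * f)
  best_cs : 0 < cs * sig β f t P * y → (1 - P) * (β * f) ≤ r * P * (β * t)

/-- Social cost of a Bayesian behavior tuple. -/
noncomputable def socialCostB (r y β f t P xnC xnR cu ρu cs ρs : ℝ) : ℝ :=
  (1 - P) * xnC + r * P * xnR +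
    y * (cu * ((1 - P) * (1 - β * f)) + ρu * (r * P * (1 - β * t)) +
         cs * ((1 - P) * (β * f)) + ρs * (r * P * (β * t)))

/-- A non-Bayesian equilibrium with accident probability `P`:
`xnC, xnR` are the masses of careful/reckless non-V2V drivers, and `xvC, xvR, xvT` the masses of
V2V drivers choosing Careful/Reckless/Trust.  The costs are `J^C = 1 - P`, `J^R = r·P` and
`J^T = (1-P)·β·f + r·P·(1-β·t)`. -/
structure NonBayesEq (r y β f t P xnC xnR xvC xvR xvT : ℝ) : Prop where
  xnC_nonneg : 0 ≤ xnC
  xnR_nonneg : 0 ≤ xnR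
  xvC_nonneg : 0 ≤ xvC
  xvR_nonneg : 0 ≤ xvR
  xvT_nonneg : 0 ≤ xvT
  sum_n : xnC + xnR = 1 - y
  sum_v : xvC + xvR + xvT = y
  best_nC : 0 < xnC → 1 - P ≤ r * P
  best_nR : 0 < xnR → r * P ≤ 1 - P
  best_vC : 0 < xvC → 1 - P ≤ min (r * P) ((1 - P) * (β * f) + r * P * (1 - β * t))
  best_vR : 0 < xvR → r * P ≤ min (1 - P) ((1 - P) * (β * f) + r * P * (1 - β * t))
  best_vT : 0 < xvT → (1 - P) * (β * f) + r * P * (1 - β * t) ≤ min (1 - P) (r * P)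

/-- Social cost of a non-Bayesian behavior tuple. -/
noncomputable def socialCostI (r β f t P xnC xnR xvC xvR xvT : ℝ) : ℝ :=
  (1 - P) * (xnC + xvC) + r * P * (xnR + xvR) +
    ((1 - P) * (β * f) + r * P * (1 - β * t)) * xvT

/-- with an endogenous accident probability, equilibrium social cost can
strictly increase when the information quality `β` increases. -/
theorem endo_information_paradox :
    ∃ (r y f t β₁ β₂ : ℝ) (p : ℝ → ℝ)
      (xnC₁ xnR₁ cu₁ ρu₁ cs₁ ρs₁ P₁ xnC₂ xnR₂ cu₂ ρu₂ cs₂ ρs₂ P₂ : ℝ),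
      1 < r ∧ y ∈ Icc (0:ℝ) 1 ∧ 0 ≤ f ∧ f < t ∧ t ≤ 1 ∧
      β₁ ∈ Icc (0:ℝ) 1 ∧ β₂ ∈ Icc (0:ℝ) 1 ∧ β₁ < β₂ ∧
      ContinuousOn p (Icc (0:ℝ) 1) ∧ StrictMonoOn p (Icc (0:ℝ) 1) ∧
      MapsTo p (Icc (0:ℝ) 1) (Icc (0:ℝ) 1) ∧
      P₁ ∈ Icc (0:ℝ) 1 ∧
      BayesEq r y β₁ f t P₁ xnC₁ xnR₁ cu₁ ρu₁ cs₁ ρs₁ ∧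
      P₁ = p (xnR₁ + ρu₁ * (1 - sig β₁ f t P₁) * y + ρs₁ * sig β₁ f t P₁ * y) ∧
      P₂ ∈ Icc (0:ℝ) 1 ∧
      BayesEq r y β₂ f t P₂ xnC₂ xnR₂ cu₂ ρu₂ cs₂ ρs₂ ∧
      P₂ = p (xnR₂ + ρu₂ * (1 - sig β₂ f t P₂) * y + ρs₂ * sig β₂ f t P₂ * y) ∧
      socialCostB r y β₁ f t P₁ xnC₁ xnR₁ cu₁ ρu₁ cs₁ ρs₁ <
        socialCostB r y β₂ f t P₂ xnC₂ xnR₂ cu₂ ρu₂ cs₂ ρs₂ := by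
  refine ⟨6/5, 1, 9/10, 1, 7/10, 1, fun x => 1163/3125 + x/5,
    0, 0, 0, 1, 1, 0, 11/25,
    0, 0, 0, 1, 1047/1375, 328/1375, 3/7,
    by norm_num, by norm_num, by norm_num, by norm_num, by norm_num,
    by norm_num, by norm_num, by norm_num,
    ?_, ?_, ?_, by norm_num, ?_, ?_, by norm_num, ?_, ?_, ?_⟩
  · exact (continuous_const.add (continuous_id.div_const 5)).continuousOn
  · intro a _ b _ hab
    simp only
    linarith
  · intro x hx
    simp only [Set.mem_Icc] at *
    constructor <;> [nlinarith [hx.1]; nlinarith [hx.2]]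
  · exact ⟨by norm_num, by norm_num, by norm_num, by norm_num, by norm_num, by norm_num,
      by norm_num, by norm_num, by norm_num,
      by norm_num, by norm_num,
      fun _ => by norm_num,
      by norm_num [sig],
      by norm_num [sig],
      fun _ => by norm_num⟩
  · norm_num [sig]
  · exact ⟨by norm_num, by norm_num, by norm_num, by norm_num, by norm_num, by norm_num,
      by norm_num, by norm_num, by norm_num,
      by norm_num, by norm_num,
      fun _ => by norm_num,
      by norm_num [sig],
      fun _ => by norm_num,
      fun _ => by norm_num⟩
  · norm_num [sig]
  · norm_num [socialCostB]
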